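/- arXiv:2012.02042 — 2 statements merged into one kernel-verified Lean document; each statement's English description precedes it below -/
import Mathlib

section
/- Fix α ∈ [1/2, 1) and n ≥ 1. Let H_n be the set of (E, μ) ∈ G_s for which there exists a finite symmetric collection of closed intervals I (meaning I ∈ 𝓘 implies −I ∈ 𝓘) with E ⊆ ⋃_{I∈𝓘} I and Σ_{I∈𝓘} |I|^{α + 1/n} < 1/n. Then H_n is an open subset of the metric space (G_s, d_G). -/
open MeasureTheory Metric

/-- The topological support of a measure. -/
def measSupport {X : Type*} [TopologicalSpace X] [MeasurableSpace X]
    (μ : Measure X) : Set X :=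
  {x | ∀ U : Set X, IsOpen U → x ∈ U → 0 < μ U}

/-- The `r`-th Fourier coefficient of a measure on the circle. -/
noncomputable def measFourierCoeff (μ : Measure (AddCircle (1:ℝ))) (r : ℤ) : ℂ :=
  ∫ x, fourier (-r) x ∂μ

/-- An element of `G_s`. -/
structure GsPair where
  E : Set (AddCircle (1:ℝ))
  μ : Measure (AddCircle (1:ℝ))
  f : C(AddCircle (1:ℝ), ℝ)
  nonempty : E.Nonempty
  closed : IsClosed E
  symE : -E = E
  prob : IsProbabilityMeasure μ
  symμ : μ.map (fun x => -x) = μ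
  supp : measSupport μ ⊆ E
  rajchman : Filter.Tendsto (measFourierCoeff μ) Filter.cofinite (nhds 0)
  density : μ ∗ μ = volume.withDensity (fun x => ENNReal.ofReal (f x))

/-- `H_n`, the set of `(E, μ) ∈ G_s` such that `E` is covered by a finite
symmetric collection of closed intervals (here a closed interval is a closed
ball `closedBall c h` of centre `c` and length `2h`) with
`∑ |I|^(α+1/n) < 1/n`, is open in `(G_s, d_G)`. -/
theorem Hn_isOpen (α : ℝ) (hα : α ∈ Set.Ico (1/2 : ℝ) 1) (n : ℕ) (hn : 1 ≤ n)
    (m : MetricSpace GsPair)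
    (hdist : ∀ p q : GsPair,
      m.dist p q =
        ((⨆ e ∈ p.E, infDist e q.E) + ⨆ g ∈ q.E, infDist g p.E) +
          (⨆ r : ℤ, ‖measFourierCoeff p.μ r - measFourierCoeff q.μ r‖) +
          ‖p.f - q.f‖) :
    @IsOpen _ m.toUniformSpace.toTopologicalSpace
      {p : GsPair | ∃ 𝓘 : Finset (AddCircle (1:ℝ) × ℝ),
        (∀ q ∈ 𝓘, 0 ≤ q.2) ∧
        (∀ q ∈ 𝓘, (-q.1, q.2) ∈ 𝓘) ∧
        p.E ⊆ ⋃ q ∈ 𝓘, closedBall q.1 q.2 ∧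
        ∑ q ∈ 𝓘, (2 * q.2) ^ (α + 1/n) < 1/n} := by
  letI := m
  haveI : Fact (0 < (1:ℝ)) := ⟨one_pos⟩
  rw [Metric.isOpen_iff]
  rintro p ⟨I, hnn, hsym, hcov, hsum⟩
  have hnpos : (0:ℝ) < (n:ℝ) := by exact_mod_cast Nat.lt_of_lt_of_le Nat.zero_lt_one hn
  have hβ : 0 < α + 1/(n:ℝ) := by
    have h1 : (0:ℝ) < 1/(n:ℝ) := by positivity
    have h2 := hα.1
    linarith
  set β := α + 1/(n:ℝ) with hβdef
  -- continuity of the expanded sum in the expansion parameter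
  have hrpow : Continuous fun y : ℝ => y ^ β :=
    continuous_iff_continuousAt.2 fun x => Real.continuousAt_rpow_const x β (Or.inr hβ.le)
  have hF : Continuous (fun ε : ℝ => ∑ r ∈ I, (2 * (r.2 + ε)) ^ β) := by
    apply continuous_finset_sum
    intro r _
    exact hrpow.comp (by fun_prop)
  have hF0 : (∑ r ∈ I, (2 * (r.2 + 0)) ^ β) < 1/(n:ℝ) := by simpa using hsum
  have hev : ∀ᶠ ε : ℝ in nhds 0, (∑ r ∈ I, (2 * (r.2 + ε)) ^ β) < 1/(n:ℝ) :=
    Filter.Tendsto.eventually_lt_const hF0 hF.continuousAt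
  obtain ⟨δ, hδ, hball⟩ := Metric.eventually_nhds_iff.1 hev
  set ε := δ/2 with hεdef
  have hε : 0 < ε := by positivity
  refine ⟨ε, hε, ?_⟩
  intro q hq
  rw [Metric.mem_ball] at hq
  -- every point of q.E is within ε of p.E
  obtain ⟨C, hC⟩ := Metric.isBounded_iff.1 (isCompact_univ (X := AddCircle (1:ℝ))).isBounded
  obtain ⟨e0, he0⟩ := p.nonempty
  have hinf : ∀ g ∈ q.E, infDist g p.E < ε := by
    intro g hg
    have hbdd : BddAbove (Set.range fun x : AddCircle (1:ℝ) =>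
        ⨆ _ : x ∈ q.E, infDist x p.E) := by
      refine ⟨max C 0, ?_⟩
      rintro _ ⟨x, rfl⟩
      dsimp only
      by_cases hx : x ∈ q.E
      · rw [ciSup_pos hx]
        exact le_max_of_le_left ((infDist_le_dist_of_mem he0).trans
          (hC (Set.mem_univ x) (Set.mem_univ e0)))
      · haveI : IsEmpty (x ∈ q.E) := ⟨hx⟩
        rw [Real.iSup_of_isEmpty]
        exact le_max_right _ _
    have hB : infDist g p.E ≤ ⨆ x ∈ q.E, infDist x p.E := by
      calc infDist g p.E = ⨆ _ : g ∈ q.E, infDist g p.E := (ciSup_pos (f := fun _ => infDist g p.E) hg).symm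
        _ ≤ _ := le_ciSup hbdd g
    have hA : 0 ≤ ⨆ e ∈ p.E, infDist e q.E :=
      Real.iSup_nonneg fun e => Real.iSup_nonneg fun _ => infDist_nonneg
    have hCn : 0 ≤ ⨆ r : ℤ, ‖measFourierCoeff p.μ r - measFourierCoeff q.μ r‖ :=
      Real.iSup_nonneg fun r => norm_nonneg _
    have hDn : 0 ≤ ‖p.f - q.f‖ := norm_nonneg _
    have hdpq := hdist p q
    have hmd : m.dist p q = dist p q := rfl
    rw [hmd] at hdpq
    have hd : dist p q < ε := by rw [dist_comm]; exact hq
    linarith [hB]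
  -- the expanded family of intervals
  refine ⟨I.image (fun r => (r.1, r.2 + ε)), ?_, ?_, ?_, ?_⟩
  · intro r hr
    obtain ⟨s, hs, rfl⟩ := Finset.mem_image.1 hr
    have := hnn s hs
    simp only
    linarith
  · intro r hr
    obtain ⟨s, hs, rfl⟩ := Finset.mem_image.1 hr
    exact Finset.mem_image.2 ⟨(-s.1, s.2), hsym s hs, rfl⟩
  · intro g hg
    obtain ⟨e, he, hge⟩ := (infDist_lt_iff p.nonempty).1 (hinf g hg)
    obtain ⟨r, hrI, hre⟩ := Set.mem_iUnion₂.1 (hcov he)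
    rw [Metric.mem_closedBall] at hre
    refine Set.mem_iUnion₂.2 ⟨(r.1, r.2 + ε), Finset.mem_image.2 ⟨r, hrI, rfl⟩, ?_⟩
    rw [Metric.mem_closedBall]
    calc dist g r.1 ≤ dist g e + dist e r.1 := dist_triangle _ _ _
      _ ≤ r.2 + ε := by linarith
  · have hinj : ∀ a ∈ I, ∀ b ∈ I,
        (fun r : AddCircle (1:ℝ) × ℝ => (r.1, r.2 + ε)) a =
        (fun r : AddCircle (1:ℝ) × ℝ => (r.1, r.2 + ε)) b → a = b := by
      intro a _ b _ h
      simp only [Prod.mk.injEq] at h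
      exact Prod.ext h.1 (by linarith [h.2])
    rw [Finset.sum_image hinj]
    have : dist ε (0:ℝ) < δ := by
      rw [Real.dist_eq, sub_zero, abs_of_pos hε]
      linarith
    exact hball this
end

section
/- Suppose 0 < Np < 1 and m ≥ 2. If Y_1, …, Y_N are independent random variables with P(Y_j = 1) = p and P(Y_j = 0) = 1 − p, then P(Σ_{j=1}^N Y_j ≥ m) ≤ 2(Np)^m / m!. -/
open MeasureTheory ProbabilityTheory

/-!
Almost surely every `Y j` is `0` or `1`, so `∑ Y j ≥ m` forces `Y j = 1` for all `j` in some
`m`-element set `S`. By independence each such event has probability `p ^ m`, and the union bound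
over the `N.choose m` sets gives `N.choose m * p ^ m ≤ (N * p) ^ m / m!`.
-/
lemma Finset.exists_card_eq_forall_eq_one_of_le_sum {ι : Type*} [Fintype ι] {x : ι → ℝ}
    (hx : ∀ j, x j = 0 ∨ x j = 1) {m : ℕ} (hm : (m : ℝ) ≤ ∑ j, x j) :
    ∃ S : Finset ι, S.card = m ∧ ∀ j ∈ S, x j = 1 := by
  classical
  have hsum : ∑ j, x j = (Finset.univ.filter fun j => x j = 1).card := by
    rw [Finset.natCast_card_filter]
    refine Finset.sum_congr rfl fun j _ => ?_
    rcases hx j with h | h <;> simp [h]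
  rw [hsum, Nat.cast_le] at hm
  obtain ⟨S, hS, rfl⟩ := Finset.exists_subset_card_eq hm
  exact ⟨S, rfl, fun j hj => (Finset.mem_filter.mp (hS hj)).2⟩

lemma ae_mem_union_of_one_le_add {Ω : Type*} [MeasurableSpace Ω] {μ : Measure Ω}
    [IsProbabilityMeasure μ] {s t : Set Ω} (hs : MeasurableSet s) (ht : MeasurableSet t)
    (hst : Disjoint s t) (h : 1 ≤ μ s + μ t) : ∀ᵐ ω ∂μ, ω ∈ s ∪ t := by
  rw [← measure_union hst ht] at h
  exact (prob_compl_eq_zero_iff (hs.union ht)).mpr (le_antisymm prob_le_one h)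

lemma ProbabilityTheory.iIndepFun.measure_le_sum_le_choose_mul_pow {Ω ι : Type*}
    [MeasurableSpace Ω] {μ : Measure Ω} [Fintype ι] {Y : ι → Ω → ℝ} (hindep : iIndepFun Y μ)
    (h01 : ∀ᵐ ω ∂μ, ∀ j, Y j ω = 0 ∨ Y j ω = 1) {q : ENNReal}
    (hq : ∀ j, μ (Y j ⁻¹' {1}) = q) (m : ℕ) :
    μ {ω | (m : ℝ) ≤ ∑ j, Y j ω} ≤ (Fintype.card ι).choose m * q ^ m := by
  classical
  calc μ {ω | (m : ℝ) ≤ ∑ j, Y j ω}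
      ≤ μ (⋃ S ∈ Finset.univ.powersetCard m, ⋂ j ∈ S, Y j ⁻¹' {1}) := by
        refine measure_mono_ae (h01.mono fun ω hω hm => ?_)
        obtain ⟨S, hS, hS1⟩ := Finset.exists_card_eq_forall_eq_one_of_le_sum hω hm
        exact Set.mem_iUnion₂.mpr
          ⟨S, Finset.mem_powersetCard.mpr ⟨S.subset_univ, hS⟩, Set.mem_iInter₂.mpr hS1⟩
    _ ≤ ∑ S ∈ Finset.univ.powersetCard m, μ (⋂ j ∈ S, Y j ⁻¹' {1}) :=
        measure_biUnion_finset_le _ _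
    _ = ∑ S ∈ Finset.univ.powersetCard m, q ^ m := by
        refine Finset.sum_congr rfl fun S hS => ?_
        rw [hindep.meas_biInter fun j _ => ⟨{1}, measurableSet_singleton 1, rfl⟩,
          Finset.prod_congr rfl fun j _ => hq j, Finset.prod_const,
          (Finset.mem_powersetCard.mp hS).2]
    _ = (Fintype.card ι).choose m * q ^ m := by
        rw [Finset.sum_const, Finset.card_powersetCard, Finset.card_univ, nsmul_eq_mul]

theorem bernoulli_sum_tail_bound_general
    {Ω : Type*} [MeasurableSpace Ω] (P : Measure Ω) [IsProbabilityMeasure P]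
    (N : ℕ) (p : ℝ) (hp : 0 < N * p)
    (m : ℕ)
    (Y : Fin N → Ω → ℝ)
    (hmeas : ∀ j, Measurable (Y j))
    (hindep : iIndepFun Y P)
    (hone : ∀ j, P {ω | Y j ω = 1} = ENNReal.ofReal p)
    (hzero : ∀ j, P {ω | Y j ω = 0} = ENNReal.ofReal (1 - p)) :
    P {ω | (m : ℝ) ≤ ∑ j, Y j ω} ≤
      ENNReal.ofReal (2 * (N * p) ^ m / (Nat.factorial m)) := by
  have hp0 : 0 ≤ p := (pos_of_mul_pos_right hp N.cast_nonneg).le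
  have h01 : ∀ᵐ ω ∂P, ∀ j, Y j ω = 0 ∨ Y j ω = 1 := by
    refine ae_all_iff.mpr fun j => ?_
    refine ae_mem_union_of_one_le_add (s := {ω | Y j ω = 0}) (t := {ω | Y j ω = 1})
      (hmeas j (measurableSet_singleton 0)) (hmeas j (measurableSet_singleton 1)) ?_ ?_
    · exact Set.disjoint_left.mpr fun ω h0 h1 => zero_ne_one (h0.symm.trans h1)
    · rw [hzero, hone, ← ENNReal.ofReal_one]
      exact (ENNReal.ofReal_le_ofReal (by linarith)).trans ENNReal.ofReal_add_le
  calc P {ω | (m : ℝ) ≤ ∑ j, Y j ω}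
      ≤ (Fintype.card (Fin N)).choose m * ENNReal.ofReal p ^ m :=
        hindep.measure_le_sum_le_choose_mul_pow h01 hone m
    _ = ENNReal.ofReal (N.choose m * p ^ m) := by
        rw [Fintype.card_fin, ENNReal.ofReal_mul (by positivity), ENNReal.ofReal_natCast,
          ENNReal.ofReal_pow hp0]
    _ ≤ ENNReal.ofReal (2 * (N * p) ^ m / (Nat.factorial m)) := by
        refine ENNReal.ofReal_le_ofReal ?_
        calc (N.choose m : ℝ) * p ^ m ≤ (N : ℝ) ^ m / m.factorial * p ^ m := by
              gcongr; exact Nat.choose_le_pow_div m N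
          _ = (N * p) ^ m / m.factorial := by ring
          _ ≤ 2 * (N * p) ^ m / m.factorial := by
              gcongr; linarith [pow_pos hp m]

/-- If `0 < Np < 1`, `m ≥ 2` and `Y_1, …, Y_N` are independent Bernoulli(p)
random variables, then `P(∑ Y_j ≥ m) ≤ 2 (Np)^m / m!`. -/
theorem bernoulli_sum_tail_bound
    {Ω : Type*} [MeasurableSpace Ω] (P : Measure Ω) [IsProbabilityMeasure P]
    (N : ℕ) (p : ℝ) (hp : 0 < N * p) (hp1 : N * p < 1)
    (m : ℕ) (hm : 2 ≤ m)
    (Y : Fin N → Ω → ℝ)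
    (hmeas : ∀ j, Measurable (Y j))
    (hindep : iIndepFun Y P)
    (hone : ∀ j, P {ω | Y j ω = 1} = ENNReal.ofReal p)
    (hzero : ∀ j, P {ω | Y j ω = 0} = ENNReal.ofReal (1 - p)) :
    P {ω | (m : ℝ) ≤ ∑ j, Y j ω} ≤
      ENNReal.ofReal (2 * (N * p) ^ m / (Nat.factorial m)) :=
  bernoulli_sum_tail_bound_general P N p hp m Y hmeas hindep hone hzero
end
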